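/- Let n ≥ 2 and d ≥ 3 be integers, and suppose there exists an integer q with 2 ≤ q ≤ n and q dividing d; write k = d/q. Then the homogeneous polynomial g = (x_1⋯x_q)^k + x_{q+1}^d + ⋯ + x_n^d ∈ ℂ[x_1,…,x_n] of degree d satisfies H(g) = α·(x_1⋯x_n)^{d−2} for some nonzero constant α ∈ ℂ, yet g is not of the form α_1 x_1^d + ⋯ + α_n x_n^d for any constants α_1,…,α_n ∈ ℂ. In particular, the answer to Koiran–Skomra's question is negative for all such pairs (n,d). -/

import Mathlib

open MvPolynomial

/-- The Hessian determinant of a multivariate polynomial. -/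
noncomputable def hessDet {n : ℕ} (f : MvPolynomial (Fin n) ℂ) : MvPolynomial (Fin n) ℂ :=
  Matrix.det (Matrix.of fun i j => pderiv i (pderiv j f))

/-!
Conjugating the Hessian by `diag(x_1, …, x_n)` gives the matrix `x_i x_j ∂_i ∂_j g`, which
acts on a monomial `x^e` by the scalar `e_j (e_i - δ_ij)`. For
`g = (x_1⋯x_q)^k + x_{q+1}^d + ⋯ + x_n^d` this matrix is block diagonal: on the first `q`
indices it is `(x_1⋯x_q)^k` times the constant matrix `k² J - k I`, of determinant
`(-k)^q (1 - kq)`, and on the others it is `diag(d(d-1) x_i^d)`. Hence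
`(x_1⋯x_n)² H(g) = α (x_1⋯x_n)^d` with `α = (-k)^q (1 - d) (d(d-1))^{n-q} ≠ 0`.
The off-diagonal entries of the same matrix vanish for every `∑ a_i x_i^d`, but not its
`(1, 2)` entry for `g`.
-/

open Finset Matrix

theorem Matrix.det_of_mul_sub_ite {ι R : Type*} [Fintype ι] [DecidableEq ι] [CommRing R]
    (c : R) :
    (of fun a b : ι => c * (c - if a = b then 1 else 0)).det =
      (-c) ^ Fintype.card ι * (1 - c * Fintype.card ι) := by
  have hrankOne : (of fun a b : ι => c * (c - if a = b then 1 else 0)) =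
      (-c) • (1 + replicateCol Unit (fun _ : ι => -c) *
        replicateRow Unit (fun _ : ι => (1 : R))) := by
    ext a b
    simp only [of_apply, Matrix.smul_apply, Matrix.add_apply, one_apply, mul_apply,
      replicateCol_apply, replicateRow_apply, univ_unique, sum_singleton, smul_eq_mul]
    split_ifs <;> ring
  rw [hrankOne, det_smul, det_one_add_replicateCol_mul_replicateRow]
  simp only [dotProduct, mul_neg, one_mul, sum_neg_distrib, sum_const, card_univ, nsmul_eq_mul]
  ring

namespace MvPolynomial

section CommSemiring

variable {σ R : Type*} [CommSemiring R]

theorem prod_X_pow_eq_monomial_sum_single (S : Finset σ) (k : ℕ) :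
    (∏ l ∈ S, X l) ^ k = monomial (∑ l ∈ S, Finsupp.single l k) (1 : R) := by
  simp only [← prod_pow, X_pow_eq_monomial, monomial_sum_one]

noncomputable def scaledHessian (f : MvPolynomial σ R) : Matrix σ σ (MvPolynomial σ R) :=
  of fun i j => X i * X j * pderiv i (pderiv j f)

section prodPowAddSumPow

variable [Fintype σ] (p : σ → Prop) [DecidablePred p]

noncomputable def prodPowAddSumPow (k d : ℕ) : MvPolynomial σ R :=
  (∏ l with p l, X l) ^ k + ∑ l with ¬p l, X l ^ d

theorem isHomogeneous_prodPowAddSumPow (k d : ℕ) (hd : k * Fintype.card {i // p i} = d) :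
    (prodPowAddSumPow p k d : MvPolynomial σ R).IsHomogeneous d := by
  refine .add ?_ (.sum _ _ _ fun i _ => isHomogeneous_X_pow i d)
  have hprod := IsHomogeneous.prod (R := R) {l | p l} X (fun _ => 1) fun i _ => isHomogeneous_X R i
  rw [sum_const, smul_eq_mul, mul_one, ← Fintype.card_subtype] at hprod
  simpa only [← hd, mul_comm] using hprod.pow k

end prodPowAddSumPow

end CommSemiring

variable {σ R : Type*} [CommRing R] [DecidableEq σ]

theorem X_mul_X_mul_pderiv_pderiv (i j : σ) (f : MvPolynomial σ R) :
    X i * X j * pderiv i (pderiv j f) =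
      X i * pderiv i (X j * pderiv j f) - if i = j then X j * pderiv j f else 0 := by
  rw [pderiv_mul, pderiv_X]
  split_ifs with h
  · subst h; simp only [Pi.single_eq_same]; ring
  · simp only [Pi.single_apply, Ne.symm h, if_false]; ring

theorem X_mul_X_mul_pderiv_pderiv_monomial (i j : σ) (s : σ →₀ ℕ) (a : R) :
    X i * X j * pderiv i (pderiv j (monomial s a)) =
      monomial s (a * s j * (s i - if i = j then 1 else 0)) := by
  rw [X_mul_X_mul_pderiv_pderiv, X_mul_pderiv_monomial, map_nsmul, mul_smul_comm,
    X_mul_pderiv_monomial]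
  simp only [smul_monomial, nsmul_eq_mul]
  split_ifs with h
  · subst h; rw [← map_sub]; congr 1; ring
  · rw [sub_zero, sub_zero]; congr 1; ring

theorem X_mul_X_mul_pderiv_pderiv_prod_X_pow (S : Finset σ) (k : ℕ) (i j : σ) :
    X i * X j * pderiv i (pderiv j ((∏ l ∈ S, X l) ^ k : MvPolynomial σ R)) =
      if i ∈ S ∧ j ∈ S then
        C ((k : R) * (k - if i = j then 1 else 0)) * (∏ l ∈ S, X l) ^ k
      else 0 := by
  have hexp (x : σ) : (∑ l ∈ S, Finsupp.single l k) x = if x ∈ S then k else 0 := by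
    simp [Finsupp.finsetSum_apply, Finsupp.single_apply]
  rw [prod_X_pow_eq_monomial_sum_single, X_mul_X_mul_pderiv_pderiv_monomial, hexp, hexp,
    C_mul_monomial, mul_one, one_mul]
  rcases eq_or_ne i j with rfl | hij
  · by_cases hi : i ∈ S <;> simp [hi]
  · by_cases hi : i ∈ S <;> by_cases hj : j ∈ S <;> simp [hi, hj, hij]

theorem X_mul_X_mul_pderiv_pderiv_X_pow (l : σ) (d : ℕ) (i j : σ) :
    X i * X j * pderiv i (pderiv j (X l ^ d : MvPolynomial σ R)) =
      if i = l ∧ j = l then C ((d : R) * (d - 1)) * X l ^ d else 0 := by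
  rw [X_pow_eq_monomial, X_mul_X_mul_pderiv_pderiv_monomial, C_mul_monomial, mul_one, one_mul]
  by_cases hi : i = l <;> by_cases hj : j = l <;> simp [hi, hj]

variable [Fintype σ]

theorem det_scaledHessian (f : MvPolynomial σ R) :
    (scaledHessian f).det = (∏ i, X i) ^ 2 * (of fun i j => pderiv i (pderiv j f)).det := by
  calc (scaledHessian f).det
      = (of fun i j => X j * (of fun i j => X i * pderiv i (pderiv j f)) i j).det := by
        congr 1; ext i j : 1; simp only [scaledHessian, of_apply]; ring
    _ = (∏ i, X i) * ((∏ i, X i) * (of fun i j => pderiv i (pderiv j f)).det) := by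
        rw [det_mul_row]; exact congrArg _ (det_mul_column _ _)
    _ = _ := by ring

theorem scaledHessian_sum_C_mul_X_pow_apply_of_ne (a : σ → R) (e : ℕ) {i j : σ}
    (hij : i ≠ j) :
    scaledHessian (∑ l, C (a l) * X l ^ e) i j = 0 := by
  simp only [scaledHessian, of_apply, map_sum, pderiv_C_mul, mul_sum, mul_left_comm _ (C _),
    X_mul_X_mul_pderiv_pderiv_X_pow]
  exact sum_eq_zero fun l _ => by rw [if_neg fun h => hij (h.1.trans h.2.symm), mul_zero]

variable (p : σ → Prop) [DecidablePred p]

theorem scaledHessian_prodPowAddSumPow_apply (k d : ℕ) (i j : σ) :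
    scaledHessian (prodPowAddSumPow p k d : MvPolynomial σ R) i j =
      (if p i ∧ p j then C ((k : R) * (k - if i = j then 1 else 0)) * (∏ l with p l, X l) ^ k
        else 0) +
      if i = j ∧ ¬p i then C ((d : R) * (d - 1)) * X i ^ d else 0 := by
  simp only [scaledHessian, of_apply, prodPowAddSumPow, map_add, map_sum, mul_add, mul_sum,
    X_mul_X_mul_pderiv_pderiv_prod_X_pow, X_mul_X_mul_pderiv_pderiv_X_pow, mem_filter, mem_univ,
    true_and]
  congr 1
  by_cases hij : i = j
  · subst hij
    simp only [and_self, true_and, sum_ite_eq, mem_filter, mem_univ]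
  · simp only [hij, false_and, if_false]
    exact sum_eq_zero fun l _ => if_neg fun h => hij (h.1.trans h.2.symm)

theorem toSquareBlockProp_scaledHessian_prodPowAddSumPow (k d : ℕ) :
    toSquareBlockProp (scaledHessian (prodPowAddSumPow p k d : MvPolynomial σ R)) p =
      (∏ l with p l, X l : MvPolynomial σ R) ^ k • (C : R →+* MvPolynomial σ R).mapMatrix
        (of fun a b : {i // p i} => (k : R) * (k - if a = b then 1 else 0)) := by
  ext a b : 1
  simp [toSquareBlockProp_def, scaledHessian_prodPowAddSumPow_apply, Subtype.ext_iff, a.2, b.2,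
    mul_comm]

theorem toSquareBlockProp_not_scaledHessian_prodPowAddSumPow (k d : ℕ) :
    toSquareBlockProp (scaledHessian (prodPowAddSumPow p k d : MvPolynomial σ R)) (¬p ·) =
      diagonal fun a : {i // ¬p i} => C ((d : R) * (d - 1)) * X (a : σ) ^ d := by
  ext a b : 1
  simp [toSquareBlockProp_def, scaledHessian_prodPowAddSumPow_apply, diagonal_apply,
    Subtype.ext_iff, a.2]

theorem det_scaledHessian_prodPowAddSumPow (k d : ℕ) (hd : k * Fintype.card {i // p i} = d) :
    (scaledHessian (prodPowAddSumPow p k d : MvPolynomial σ R)).det =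
      C ((-k : R) ^ Fintype.card {i // p i} * (1 - d) * (d * (d - 1)) ^ Fintype.card {i // ¬p i}) *
        (∏ i, X i) ^ d := by
  rw [twoBlockTriangular_det _ p, toSquareBlockProp_scaledHessian_prodPowAddSumPow,
    toSquareBlockProp_not_scaledHessian_prodPowAddSumPow, det_smul, ← RingHom.map_det,
    det_of_mul_sub_ite, det_diagonal]
  · have hpow : ((∏ l with p l, X l : MvPolynomial σ R) ^ k) ^ Fintype.card {i // p i} =
        ∏ a : {i // p i}, X (a : σ) ^ d := by
      rw [← pow_mul, hd, prod_subtype _ (fun _ => mem_filter_univ _), prod_pow]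
    rw [hpow, prod_mul_distrib, prod_const, card_univ, ← prod_pow,
      ← Fintype.prod_subtype_mul_prod_subtype p, ← hd]
    simp only [map_mul, map_pow, map_sub, map_one, map_natCast, Nat.cast_mul]
    ring
  · intro i hi j hj
    rw [scaledHessian_prodPowAddSumPow_apply, if_neg fun h => hi h.1,
      if_neg fun h => h.2 (h.1 ▸ hj), add_zero]

theorem prodPowAddSumPow_ne_sum_C_mul_X_pow [IsDomain R] [CharZero R] {k : ℕ} (d : ℕ)
    (hp : 1 < Fintype.card {i // p i}) (hk : k ≠ 0) (a : σ → R) (e : ℕ) :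
    prodPowAddSumPow p k d ≠ ∑ i, C (a i) * X i ^ e := by
  obtain ⟨⟨i, hi⟩, ⟨j, hj⟩, hij⟩ := Fintype.exists_pair_of_one_lt_card hp
  have hij : i ≠ j := fun h => hij (Subtype.ext h)
  intro h
  have hentry := congrArg (scaledHessian · i j) h
  simp only [scaledHessian_prodPowAddSumPow_apply,
    scaledHessian_sum_C_mul_X_pow_apply_of_ne _ _ hij, hi, hj, hij, and_self, not_true,
    if_true, if_false, add_zero, sub_zero] at hentry
  refine mul_ne_zero ?_ (pow_ne_zero _ (prod_ne_zero_iff.2 fun l _ => X_ne_zero l)) hentry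
  simpa using hk

end MvPolynomial

theorem hessDet_prodPowAddSumPow {n : ℕ} (p : Fin n → Prop) [DecidablePred p] (k d : ℕ)
    (hd : k * Fintype.card {i // p i} = d) (h2 : 2 ≤ d) :
    hessDet (prodPowAddSumPow p k d) =
      C ((-k : ℂ) ^ Fintype.card {i // p i} * (1 - d) *
          (d * (d - 1)) ^ Fintype.card {i // ¬p i}) * (∏ i, X i) ^ (d - 2) := by
  have hX : (∏ i, X i : MvPolynomial (Fin n) ℂ) ^ 2 ≠ 0 :=
    pow_ne_zero _ (prod_ne_zero_iff.2 fun i _ => X_ne_zero i)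
  apply mul_left_cancel₀ hX
  rw [hessDet, ← det_scaledHessian, det_scaledHessian_prodPowAddSumPow p k d hd, mul_left_comm,
    ← pow_add, Nat.add_sub_cancel' h2]

theorem koiran_skomra_negative (n d q : ℕ) (hd : 3 ≤ d)
    (hq2 : 2 ≤ q) (hqn : q ≤ n) (hqd : q ∣ d) :
    ∀ g : MvPolynomial (Fin n) ℂ,
      g = (∏ i ∈ Finset.univ.filter (fun i : Fin n => (i : ℕ) < q), X i) ^ (d / q) +
          ∑ i ∈ Finset.univ.filter (fun i : Fin n => q ≤ (i : ℕ)), X i ^ d →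
      g.IsHomogeneous d ∧
      (∃ α : ℂ, α ≠ 0 ∧ hessDet g = C α * (∏ i : Fin n, X i) ^ (d - 2)) ∧
      ¬ ∃ a : Fin n → ℂ, g = ∑ i : Fin n, C (a i) * X i ^ d := by
  intro g hg
  have hkd : d / q * Fintype.card {i : Fin n // (i : ℕ) < q} = d := by
    rw [Fintype.card_fin_lt_of_le hqn]; exact Nat.div_mul_cancel hqd
  have hk : d / q ≠ 0 := by
    intro h; rw [h, zero_mul] at hkd; omega
  obtain rfl : g = prodPowAddSumPow (fun i : Fin n => (i : ℕ) < q) (d / q) d := by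
    simp only [hg, prodPowAddSumPow, not_lt]
  refine ⟨isHomogeneous_prodPowAddSumPow _ _ _ hkd,
    ⟨_, ?_, hessDet_prodPowAddSumPow _ _ _ hkd (by omega)⟩, ?_⟩
  · have hd0 : (d : ℂ) ≠ 0 := by exact_mod_cast (by omega : d ≠ 0)
    have hd1 : (d : ℂ) ≠ 1 := by exact_mod_cast (by omega : d ≠ 1)
    have hk0 : ((d / q : ℕ) : ℂ) ≠ 0 := by exact_mod_cast hk
    simp [hd0, hk0, sub_eq_zero, hd1, hd1.symm]
  · rintro ⟨a, ha⟩
    exact prodPowAddSumPow_ne_sum_C_mul_X_pow _ d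
      (by rw [Fintype.card_fin_lt_of_le hqn]; omega) hk a d ha
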